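/- arXiv:1608.01833 — 6 statements merged into one kernel-verified Lean document; each statement's English description precedes it below -/
import Mathlib

section
/- For any σ-finite measure space (S, μ) and any integrable F on S × S, the cut norm of F equals zero if and only if F = 0 almost everywhere with respect to μ × μ. -/
/-!
Every measurable rectangle `T ×ˢ U` occurs in the supremum defining `‖F‖_□`, so `‖F‖_□ = 0`
forces `F` to integrate to zero over every rectangle. Writing `F = F⁺ - F⁻`, the finite
integrals of `F⁺` and `F⁻` then agree on the π-system of rectangles, which generates the product
σ-algebra, so `F⁺ = F⁻` a.e., i.e. `F = 0` a.e.
-/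

open MeasureTheory Filter Topology

noncomputable def cutNorm {S : Type*} [MeasurableSpace S] (μ : Measure S)
    (F : S × S → ℝ) : ℝ :=
  ⨆ TU : {TU : Set S × Set S // MeasurableSet TU.1 ∧ MeasurableSet TU.2},
    |∫ p in TU.1.1 ×ˢ TU.1.2, F p ∂(μ.prod μ)|

theorem ENNReal.eq_zero_of_ofReal_eq_ofReal_neg {a : ℝ}
    (h : ENNReal.ofReal a = ENNReal.ofReal (-a)) : a = 0 := by
  rcases le_total a 0 with ha | ha
  · rw [ENNReal.ofReal_of_nonpos ha, eq_comm, ENNReal.ofReal_eq_zero] at h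
    linarith
  · rw [ENNReal.ofReal_of_nonpos (neg_nonpos.mpr ha), ENNReal.ofReal_eq_zero] at h
    linarith

namespace MeasureTheory

theorem Integrable.ae_eq_zero_of_forall_setIntegral_prod_eq_zero {α β : Type*}
    [MeasurableSpace α] [MeasurableSpace β] {μ : Measure (α × β)} {F : α × β → ℝ}
    (hF : Integrable F μ)
    (h : ∀ ⦃s : Set α⦄, MeasurableSet s → ∀ ⦃t : Set β⦄, MeasurableSet t →
      ∫ x in s ×ˢ t, F x ∂μ = 0) :
    F =ᵐ[μ] 0 := by
  have h_pos_eq_neg : (fun x ↦ ENNReal.ofReal (F x)) =ᵐ[μ] fun x ↦ ENNReal.ofReal (-F x) := by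
    refine ae_eq_of_setLIntegral_prod_eq hF.aemeasurable.ennreal_ofReal
      hF.aemeasurable.neg.ennreal_ofReal hF.lintegral_lt_top.ne fun s hs t ht ↦ ?_
    have hFst := hF.restrict (s := s ×ˢ t)
    have h_diff := h hs ht
    rw [integral_eq_lintegral_pos_part_sub_lintegral_neg_part hFst, sub_eq_zero] at h_diff
    exact (ENNReal.toReal_eq_toReal_iff' hFst.lintegral_lt_top.ne
      hFst.neg.lintegral_lt_top.ne).mp h_diff
  filter_upwards [h_pos_eq_neg] with x hx
  exact ENNReal.eq_zero_of_ofReal_eq_ofReal_neg hx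

end MeasureTheory

section CutNorm

variable {S : Type*} [MeasurableSpace S] {μ : Measure S} {F : S × S → ℝ}

theorem bddAbove_range_abs_setIntegral_prod (hF : Integrable F (μ.prod μ)) :
    BddAbove (Set.range fun TU : {TU : Set S × Set S // MeasurableSet TU.1 ∧ MeasurableSet TU.2} ↦
      |∫ p in TU.1.1 ×ˢ TU.1.2, F p ∂(μ.prod μ)|) := by
  refine ⟨∫ p, |F p| ∂(μ.prod μ), ?_⟩
  rintro _ ⟨TU, rfl⟩
  calc |∫ p in TU.1.1 ×ˢ TU.1.2, F p ∂(μ.prod μ)|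
      ≤ ∫ p in TU.1.1 ×ˢ TU.1.2, |F p| ∂(μ.prod μ) := abs_integral_le_integral_abs
    _ ≤ ∫ p, |F p| ∂(μ.prod μ) := setIntegral_le_integral hF.abs (.of_forall fun _ ↦ abs_nonneg _)

theorem abs_setIntegral_prod_le_cutNorm (hF : Integrable F (μ.prod μ)) {T U : Set S}
    (hT : MeasurableSet T) (hU : MeasurableSet U) :
    |∫ p in T ×ˢ U, F p ∂(μ.prod μ)| ≤ cutNorm μ F :=
  le_ciSup (bddAbove_range_abs_setIntegral_prod hF) ⟨(T, U), hT, hU⟩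

theorem cutNorm_eq_zero_of_ae_eq_zero (hF : F =ᵐ[μ.prod μ] 0) : cutNorm μ F = 0 := by
  have : Nonempty {TU : Set S × Set S // MeasurableSet TU.1 ∧ MeasurableSet TU.2} :=
    ⟨⟨(∅, ∅), .empty, .empty⟩⟩
  simp only [cutNorm, integral_eq_zero_of_ae (ae_restrict_of_ae hF), abs_zero, ciSup_const]

end CutNorm

theorem cutNorm_eq_zero_iff_general {S : Type*} [MeasurableSpace S] (μ : Measure S)
    (F : S × S → ℝ) (hF : Integrable F (μ.prod μ)) :
    cutNorm μ F = 0 ↔ F =ᵐ[μ.prod μ] 0 := by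
  refine ⟨fun h ↦ hF.ae_eq_zero_of_forall_setIntegral_prod_eq_zero fun T hT U hU ↦ ?_,
    cutNorm_eq_zero_of_ae_eq_zero⟩
  exact abs_nonpos_iff.mp (h ▸ abs_setIntegral_prod_le_cutNorm hF hT hU)

theorem cutNorm_eq_zero_iff {S : Type*} [MeasurableSpace S] (μ : Measure S) [SigmaFinite μ]
    (F : S × S → ℝ) (hF : Integrable F (μ.prod μ)) :
    cutNorm μ F = 0 ↔ F =ᵐ[μ.prod μ] 0 :=
  cutNorm_eq_zero_iff_general μ F hF
end

section
/- Let X be a locally compact second countable Hausdorff space, and let μₙ (n ∈ ℕ) and μ be Radon measures on X such that μₙ converges vaguely to μ (i.e., ∫ f dμₙ → ∫ f dμ for every continuous function f with compact support). Then μₙ × μₙ converges vaguely to μ × μ on X × X. -/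
/-!
Multiplying by a compactly supported bump `φ : X → [0, ∞)` with `φ = 1` on both projections of
`tsupport f` turns `μₙ` and `ν` into finite measures `φμₙ`, `φν`; they converge weakly because
`φ g` has compact support for every bounded continuous `g`. Since `X` is metrizable and second
countable, the product of weakly convergent finite measures converges weakly: normalise to
probability measures, where this is `ProbabilityMeasure.continuous_prod`. Finally `f` has the
same integral against `μₙ ⊗ μₙ` as against `φμₙ ⊗ φμₙ`.
-/

open MeasureTheory Filter Topology Set
open scoped NNReal ENNReal CompactlySupported

namespace MeasureTheory.FiniteMeasure

variable {α β : Type*} [MeasurableSpace α] [MeasurableSpace β]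

lemma nonempty_of_ne_zero {μ : FiniteMeasure α} (hμ : μ ≠ 0) : Nonempty α :=
  not_isEmpty_iff.1 fun _ ↦ hμ (Subtype.ext (Measure.eq_zero_of_isEmpty _))

lemma prod_eq_mass_smul_normalize_prod [Nonempty α] [Nonempty β]
    (μ : FiniteMeasure α) (ν : FiniteMeasure β) :
    μ.prod ν = (μ.mass * ν.mass) • (μ.normalize.prod ν.normalize).toFiniteMeasure := by
  conv_lhs => rw [μ.self_eq_mass_smul_normalize, ν.self_eq_mass_smul_normalize]
  apply Subtype.ext
  simp [Measure.prod_smul_left, Measure.prod_smul_right, smul_smul, mul_comm]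

variable [TopologicalSpace α] [TopologicalSpace β] [SecondCountableTopology α]
    [SecondCountableTopology β] [TopologicalSpace.PseudoMetrizableSpace α]
    [TopologicalSpace.PseudoMetrizableSpace β] [OpensMeasurableSpace α] [OpensMeasurableSpace β]

theorem tendsto_prod {ι : Type*} {F : Filter ι} {μs : ι → FiniteMeasure α}
    {νs : ι → FiniteMeasure β} {μ : FiniteMeasure α} {ν : FiniteMeasure β}
    (hμ : Tendsto μs F (𝓝 μ)) (hν : Tendsto νs F (𝓝 ν)) :
    Tendsto (fun i ↦ (μs i).prod (νs i)) F (𝓝 (μ.prod ν)) := by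
  have hmass : Tendsto (fun i ↦ ((μs i).prod (νs i)).mass) F (𝓝 (μ.prod ν).mass) := by
    simpa only [mass_prod] using hμ.mass.mul hν.mass
  -- `normalize` is continuous only at nonzero measures, so a zero limit is treated by its mass.
  rcases eq_or_ne μ 0 with rfl | hμ0
  · rw [zero_prod] at hmass ⊢
    exact tendsto_zero_of_tendsto_zero_mass (by simpa using hmass)
  rcases eq_or_ne ν 0 with rfl | hν0
  · rw [prod_zero] at hmass ⊢
    exact tendsto_zero_of_tendsto_zero_mass (by simpa using hmass)
  have := nonempty_of_ne_zero hμ0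
  have := nonempty_of_ne_zero hν0
  simp_rw [prod_eq_mass_smul_normalize_prod]
  refine (hμ.mass.mul hν.mass).smul <|
    ProbabilityMeasure.toFiniteMeasure_continuous.tendsto _ |>.comp <|
    (ProbabilityMeasure.continuous_prod.tendsto _).comp <|
    (tendsto_normalize_of_tendsto hμ hμ0).prodMk_nhds (tendsto_normalize_of_tendsto hν hν0)

end MeasureTheory.FiniteMeasure

namespace MeasureTheory.Measure

variable {X : Type*} [TopologicalSpace X] [MeasurableSpace X] [OpensMeasurableSpace X]

instance isFiniteMeasure_withDensity_compactlySupported (μ : Measure X)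
    [IsFiniteMeasureOnCompacts μ] (φ : C_c(X, ℝ≥0)) :
    IsFiniteMeasure (μ.withDensity fun x ↦ φ x) := by
  refine isFiniteMeasure_withDensity ?_
  have hφ : Integrable (fun x ↦ (φ x : ℝ)) μ :=
    (NNReal.continuous_coe.comp φ.continuous).integrable_of_hasCompactSupport
      (φ.hasCompactSupport.comp_left NNReal.coe_zero)
  simpa using hφ.hasFiniteIntegral.ne

noncomputable def withDensityFiniteMeasure (μ : Measure X) [IsFiniteMeasureOnCompacts μ]
    (φ : C_c(X, ℝ≥0)) : FiniteMeasure X :=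
  ⟨μ.withDensity fun x ↦ φ x, inferInstance⟩

@[simp]
lemma toMeasure_withDensityFiniteMeasure (μ : Measure X) [IsFiniteMeasureOnCompacts μ]
    (φ : C_c(X, ℝ≥0)) :
    (μ.withDensityFiniteMeasure φ : Measure X) = μ.withDensity fun x ↦ φ x :=
  rfl

theorem tendsto_withDensityFiniteMeasure {ι : Type*} {F : Filter ι} {μs : ι → Measure X}
    {μ : Measure X} [∀ i, IsFiniteMeasureOnCompacts (μs i)] [IsFiniteMeasureOnCompacts μ]
    (h : ∀ f : X → ℝ, Continuous f → HasCompactSupport f →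
      Tendsto (fun i ↦ ∫ x, f x ∂μs i) F (𝓝 (∫ x, f x ∂μ))) (φ : C_c(X, ℝ≥0)) :
    Tendsto (fun i ↦ (μs i).withDensityFiniteMeasure φ) F (𝓝 (μ.withDensityFiniteMeasure φ)) := by
  refine FiniteMeasure.tendsto_iff_forall_integral_tendsto.2 fun g ↦ ?_
  have hφ : Measurable φ := (map_continuous φ).measurable
  simp only [toMeasure_withDensityFiniteMeasure, integral_withDensity_eq_integral_smul hφ,
    NNReal.smul_def, smul_eq_mul]
  exact h _ ((NNReal.continuous_coe.comp φ.continuous).mul g.continuous)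
    ((φ.hasCompactSupport.comp_left NNReal.coe_zero).mul_right)

end MeasureTheory.Measure

theorem MeasureTheory.integral_prod_withDensity_of_eqOn_one {α β E : Type*}
    [MeasurableSpace α] [MeasurableSpace β] [NormedAddCommGroup E] [NormedSpace ℝ E]
    {μ : Measure α} {ν : Measure β} [SFinite ν] {φ : α → ℝ≥0} {ψ : β → ℝ≥0}
    (hφ : Measurable φ) (hψ : Measurable ψ) {s : Set α} {t : Set β}
    (hφs : EqOn φ 1 s) (hψt : EqOn ψ 1 t) {f : α × β → E} (hf : Function.support f ⊆ s ×ˢ t) :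
    ∫ p, f p ∂(μ.withDensity fun x ↦ φ x).prod (ν.withDensity fun y ↦ ψ y) =
      ∫ p, f p ∂μ.prod ν := by
  have hdens : (fun p : α × β ↦ (φ p.1 : ℝ≥0∞) * ψ p.2) =
      fun p ↦ ((φ p.1 * ψ p.2 : ℝ≥0) : ℝ≥0∞) := by
    simp
  rw [prod_withDensity (by fun_prop) (by fun_prop), hdens,
    integral_withDensity_eq_integral_smul (by fun_prop)]
  refine integral_congr_ae (.of_forall fun p ↦ ?_)
  by_cases hp : f p = 0
  · simp [hp]
  · simp [hφs (hf hp).1, hψt (hf hp).2]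

lemma IsCompact.exists_compactlySupported_eqOn_one {X : Type*} [TopologicalSpace X] [T2Space X]
    [LocallyCompactSpace X] {K : Set X} (hK : IsCompact K) : ∃ φ : C_c(X, ℝ≥0), EqOn φ 1 K := by
  obtain ⟨f, hf1, -, hfc, -⟩ := exists_continuous_one_zero_of_isCompact hK isClosed_empty
    (disjoint_empty K)
  exact ⟨(⟨f, hfc⟩ : C_c(X, ℝ)).nnrealPart, fun x hx ↦ by
    simp [CompactlySupportedContinuousMap.nnrealPart_apply, hf1 hx]⟩

theorem vague_convergence_prod {X : Type*} [TopologicalSpace X] [T2Space X]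
    [LocallyCompactSpace X] [SecondCountableTopology X]
    [MeasurableSpace X] [BorelSpace X]
    (μ : ℕ → Measure X) (ν : Measure X)
    [∀ n, IsFiniteMeasureOnCompacts (μ n)] [IsFiniteMeasureOnCompacts ν]
    (hvague : ∀ f : X → ℝ, Continuous f → HasCompactSupport f →
      Tendsto (fun n => ∫ x, f x ∂(μ n)) atTop (𝓝 (∫ x, f x ∂ν))) :
    ∀ f : X × X → ℝ, Continuous f → HasCompactSupport f →
      Tendsto (fun n => ∫ p, f p ∂((μ n).prod (μ n))) atTop
        (𝓝 (∫ p, f p ∂(ν.prod ν))) := by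
  intro f hf hfc
  set K := Prod.fst '' tsupport f ∪ Prod.snd '' tsupport f
  have hK : IsCompact K := (hfc.image continuous_fst).union (hfc.image continuous_snd)
  have hfK : Function.support f ⊆ K ×ˢ K := (subset_tsupport f).trans <|
    subset_fst_image_prod_snd_image.trans (prod_mono subset_union_left subset_union_right)
  obtain ⟨φ, hφ⟩ := hK.exists_compactlySupported_eqOn_one
  have hweak := Measure.tendsto_withDensityFiniteMeasure hvague φ
  have hprod := FiniteMeasure.tendsto_iff_forall_integral_tendsto.1
    (FiniteMeasure.tendsto_prod hweak hweak)
    (⟨⟨f, hf⟩, hfc⟩ : C_c(X × X, ℝ)).toBoundedContinuousFunction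
  have hφm : Measurable φ := (map_continuous φ).measurable
  simpa [integral_prod_withDensity_of_eqOn_one hφm hφm hφ hφ hfK] using hprod
end

section
/- Let μ be a finite Borel measure on a compact metric space K and let F ∈ L¹(K × K, μ × μ). Then the cut norm of F equals the supremum, over all continuous functions g, h : K → [0,1], of |∫_{K×K} F(x,y) g(x) h(y) dμ(x) dμ(y)|. -/
open MeasureTheory Filter Topology

/-!
For fixed `h`, Fubini turns `g ↦ ∫ F(x,y) g(x) h(y)` into `g ↦ ∫ ψ g` with
`ψ(x) = ∫ F(x,y) h(y) dy`, and over `0 ≤ g ≤ 1` the absolute value of this is maximised by the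
indicator of `{ψ ≥ 0}` or of `{ψ ≤ 0}`; doing this in both variables shows that continuous
weights never beat rectangles. Conversely, the marginals of the finite measure `|F| · (μ × μ)` are
regular, so by Urysohn's lemma the indicators of `T` and `U` agree with continuous `[0,1]`-valued
functions outside sets `S`, `S'` such that `|F|` has small mass on `S × K ∪ K × S'`, and this
mass bounds the difference of the integrals against the two pairs of weights.
-/

open Set
open scoped ENNReal

lemma Real.iSup_eq_iSup_of_forall_exists {ι ι' : Sort*} {f : ι → ℝ} {g : ι' → ℝ}
    (hf₀ : ∀ i, 0 ≤ f i) (hg₀ : ∀ j, 0 ≤ g j) (hf : BddAbove (range f))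
    (hgf : ∀ j, ∃ i, g j ≤ f i) (hfg : ∀ i, ∀ ε > 0, ∃ j, f i < g j + ε) :
    ⨆ i, f i = ⨆ j, g j := by
  obtain ⟨C, hC⟩ := hf
  have hg : BddAbove (range g) := ⟨C, forall_mem_range.2 fun j =>
    let ⟨i, hi⟩ := hgf j; hi.trans (hC (mem_range_self i))⟩
  refine le_antisymm (Real.iSup_le (fun i => le_of_forall_pos_lt_add fun ε hε => ?_)
    (Real.iSup_nonneg hg₀)) (Real.iSup_le (fun j => ?_) (Real.iSup_nonneg hf₀))
  · obtain ⟨j, hj⟩ := hfg i ε hε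
    exact hj.trans_le ((add_le_add_iff_right ε).2 (le_ciSup hg j))
  · obtain ⟨i, hi⟩ := hgf j
    exact hi.trans (le_ciSup ⟨C, hC⟩ i)

lemma Set.indicator_one_mem_Icc {X : Type*} (T : Set X) (x : X) :
    T.indicator (1 : X → ℝ) x ∈ Icc (0 : ℝ) 1 := by
  by_cases hx : x ∈ T <;> simp [hx]

lemma abs_mul_mul_sub_mul_mul_le (r : ℝ) {s s' t t' : ℝ} (hs : s ∈ Icc (0 : ℝ) 1)
    (hs' : s' ∈ Icc (0 : ℝ) 1) (ht : t ∈ Icc (0 : ℝ) 1) (ht' : t' ∈ Icc (0 : ℝ) 1) :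
    |r * s * t - r * s' * t'| ≤ |r| := by
  rw [mul_assoc, mul_assoc, ← mul_sub, abs_mul]
  refine mul_le_of_le_one_right (abs_nonneg r) (abs_sub_le_iff.2 ⟨?_, ?_⟩) <;>
    nlinarith [hs.1, hs.2, hs'.1, hs'.2, ht.1, ht.2, ht'.1, ht'.2]

section WeightedIntegral

variable {γ : Type*} [MeasurableSpace γ] {m : Measure γ}

lemma MeasureTheory.Integrable.mul_of_mem_Icc {f a : γ → ℝ} (hf : Integrable f m)
    (ha : AEStronglyMeasurable a m) (ha01 : ∀ x, a x ∈ Icc (0 : ℝ) 1) :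
    Integrable (fun x => f x * a x) m :=
  hf.mul_bdd ha (c := 1) (Eventually.of_forall fun x => by
    rw [Real.norm_eq_abs, abs_of_nonneg (ha01 x).1]; exact (ha01 x).2)

lemma exists_measurableSet_abs_integral_mul_le {ψ : γ → ℝ} (hψ : Integrable ψ m) {a : γ → ℝ}
    (ha : AEStronglyMeasurable a m) (ha01 : ∀ x, a x ∈ Icc (0 : ℝ) 1) :
    ∃ T, MeasurableSet T ∧ |∫ x, ψ x * a x ∂m| ≤ |∫ x in T, ψ x ∂m| := by
  obtain ⟨φ, hφm, hψφ⟩ := hψ.1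
  have hφ : Integrable φ m := hψ.congr hψφ
  have hφa : Integrable (fun x => φ x * a x) m := hφ.mul_of_mem_Icc ha ha01
  have hP : MeasurableSet {x | 0 ≤ φ x} := measurableSet_le measurable_const hφm.measurable
  have hN : MeasurableSet {x | φ x ≤ 0} := measurableSet_le hφm.measurable measurable_const
  have hupper : ∫ x, φ x * a x ∂m ≤ ∫ x in {x | 0 ≤ φ x}, φ x ∂m := by
    rw [← integral_indicator hP]
    refine integral_mono hφa (hφ.indicator hP) fun x => ?_
    by_cases hx : 0 ≤ φ x
    · simpa [hx] using mul_le_of_le_one_right hx (ha01 x).2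
    · simpa [hx] using mul_nonpos_of_nonpos_of_nonneg (not_le.1 hx).le (ha01 x).1
  have hlower : ∫ x in {x | φ x ≤ 0}, φ x ∂m ≤ ∫ x, φ x * a x ∂m := by
    rw [← integral_indicator hN]
    refine integral_mono (hφ.indicator hN) hφa fun x => ?_
    by_cases hx : φ x ≤ 0
    · simp only [indicator_of_mem (show x ∈ {x | φ x ≤ 0} from hx)]
      nlinarith [(ha01 x).2]
    · simpa [hx] using mul_nonneg (not_le.1 hx).le (ha01 x).1
  have hset : ∀ s, ∫ x in s, ψ x ∂m = ∫ x in s, φ x ∂m := fun s =>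
    integral_congr_ae (ae_restrict_of_ae hψφ)
  rw [integral_congr_ae (hψφ.mono fun x hx => congrArg (· * a x) hx)]
  rcases le_total 0 (∫ x, φ x * a x ∂m) with h0 | h0
  · refine ⟨_, hP, ?_⟩
    rw [hset, abs_of_nonneg h0, abs_of_nonneg (setIntegral_nonneg hP fun x hx => hx)]
    exact hupper
  · refine ⟨_, hN, ?_⟩
    rw [hset, abs_of_nonpos h0, abs_of_nonpos (setIntegral_nonpos hN fun x hx => hx)]
    exact neg_le_neg hlower

lemma enorm_integral_sub_le_withDensity {F f₁ f₂ : γ → ℝ} (h₁ : Integrable f₁ m)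
    (h₂ : Integrable f₂ m) (hle : ∀ p, |f₁ p - f₂ p| ≤ |F p|) {S : Set γ} (hS : MeasurableSet S)
    (heq : EqOn f₁ f₂ Sᶜ) :
    ‖∫ p, f₁ p ∂m - ∫ p, f₂ p ∂m‖ₑ ≤ m.withDensity (fun p => ‖F p‖ₑ) S := by
  rw [← integral_sub h₁ h₂, withDensity_apply _ hS, ← lintegral_indicator hS]
  refine (enorm_integral_le_lintegral_enorm _).trans (lintegral_mono fun p => ?_)
  by_cases hp : p ∈ S
  · simpa [hp, Real.enorm_eq_ofReal_abs] using ENNReal.ofReal_le_ofReal (hle p)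
  · simp [hp, heq hp]

end WeightedIntegral

section Rectangles

variable {α β : Type*} [MeasurableSpace α] [MeasurableSpace β] {μ : Measure α} {ν : Measure β}

lemma MeasureTheory.Integrable.mul_fst_of_mem_Icc {G : α × β → ℝ}
    (hG : Integrable G (μ.prod ν)) {a : α → ℝ} (ha : Measurable a)
    (ha01 : ∀ x, a x ∈ Icc (0 : ℝ) 1) :
    Integrable (fun p => G p * a p.1) (μ.prod ν) :=
  hG.mul_of_mem_Icc (a := fun p => a p.1) (ha.comp measurable_fst).aestronglyMeasurable
    fun p => ha01 p.1

lemma MeasureTheory.Integrable.mul_fst_mul_snd_of_mem_Icc {F : α × β → ℝ}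
    (hF : Integrable F (μ.prod ν)) {a : α → ℝ} {b : β → ℝ} (ha : Measurable a)
    (ha01 : ∀ x, a x ∈ Icc (0 : ℝ) 1) (hb : Measurable b) (hb01 : ∀ y, b y ∈ Icc (0 : ℝ) 1) :
    Integrable (fun p => F p * a p.1 * b p.2) (μ.prod ν) :=
  (hF.mul_fst_of_mem_Icc ha ha01).mul_of_mem_Icc (a := fun p => b p.2)
    (hb.comp measurable_snd).aestronglyMeasurable fun p => hb01 p.2

lemma setIntegral_prod_eq_integral_mul_indicator {F : α × β → ℝ} {T : Set α} {U : Set β}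
    (hT : MeasurableSet T) (hU : MeasurableSet U) :
    ∫ p in T ×ˢ U, F p ∂(μ.prod ν) =
      ∫ p, F p * T.indicator 1 p.1 * U.indicator 1 p.2 ∂(μ.prod ν) := by
  rw [← integral_indicator (hT.prod hU)]
  congr 1 with p
  by_cases h₁ : p.1 ∈ T <;> by_cases h₂ : p.2 ∈ U <;> simp [h₁, h₂]

variable [SFinite μ] [SFinite ν]

lemma exists_measurableSet_abs_integral_mul_fst_le {G : α × β → ℝ} (hG : Integrable G (μ.prod ν))
    {a : α → ℝ} (ha : Measurable a) (ha01 : ∀ x, a x ∈ Icc (0 : ℝ) 1) :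
    ∃ T, MeasurableSet T ∧
      |∫ p, G p * a p.1 ∂(μ.prod ν)| ≤ |∫ p in T ×ˢ univ, G p ∂(μ.prod ν)| := by
  obtain ⟨T, hT, hle⟩ :=
    exists_measurableSet_abs_integral_mul_le hG.integral_prod_left ha.aestronglyMeasurable ha01
  refine ⟨T, hT, ?_⟩
  rw [setIntegral_prod _ hG.integrableOn, Measure.restrict_univ,
    integral_prod _ (hG.mul_fst_of_mem_Icc ha ha01)]
  simpa only [integral_mul_const] using hle

lemma exists_measurableSet_abs_integral_mul_snd_le {G : α × β → ℝ} (hG : Integrable G (μ.prod ν))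
    {b : β → ℝ} (hb : Measurable b) (hb01 : ∀ y, b y ∈ Icc (0 : ℝ) 1) :
    ∃ U, MeasurableSet U ∧
      |∫ p, G p * b p.2 ∂(μ.prod ν)| ≤ |∫ p in univ ×ˢ U, G p ∂(μ.prod ν)| := by
  obtain ⟨U, hU, hle⟩ := exists_measurableSet_abs_integral_mul_fst_le hG.swap hb hb01
  refine ⟨U, hU, ?_⟩
  rwa [← integral_prod_swap, ← setIntegral_prod_swap]

lemma exists_measurableSet_abs_integral_mul_fst_mul_snd_le {F : α × β → ℝ}
    (hF : Integrable F (μ.prod ν)) {a : α → ℝ} {b : β → ℝ} (ha : Measurable a)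
    (ha01 : ∀ x, a x ∈ Icc (0 : ℝ) 1) (hb : Measurable b) (hb01 : ∀ y, b y ∈ Icc (0 : ℝ) 1) :
    ∃ T U, MeasurableSet T ∧ MeasurableSet U ∧
      |∫ p, F p * a p.1 * b p.2 ∂(μ.prod ν)| ≤ |∫ p in T ×ˢ U, F p ∂(μ.prod ν)| := by
  obtain ⟨U, hU, hbU⟩ := exists_measurableSet_abs_integral_mul_snd_le
    (hF.mul_fst_of_mem_Icc ha ha01) hb hb01
  have hUm : MeasurableSet (univ ×ˢ U : Set (α × β)) := MeasurableSet.univ.prod hU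
  obtain ⟨T, hT, haT⟩ := exists_measurableSet_abs_integral_mul_fst_le (hF.indicator hUm) ha ha01
  refine ⟨T, U, hT, hU, hbU.trans ?_⟩
  rw [← integral_indicator hUm]
  simp only [indicator_mul_left]
  refine haT.trans_eq ?_
  rw [setIntegral_indicator hUm, prod_inter_prod, univ_inter, inter_univ]

end Rectangles

lemma MeasurableSet.exists_continuous_eqOn_indicator {X : Type*} [TopologicalSpace X]
    [NormalSpace X] [MeasurableSpace X] [OpensMeasurableSpace X] {ρ : Measure X}
    [ρ.WeaklyRegular] {T : Set X} (hT : MeasurableSet T) (hρT : ρ T ≠ ∞) {ε : ℝ≥0∞}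
    (hε : ε ≠ 0) :
    ∃ g : C(X, ℝ), (∀ x, g x ∈ Icc (0 : ℝ) 1) ∧
      ∃ S, MeasurableSet S ∧ ρ S < ε ∧ EqOn g (T.indicator 1) Sᶜ := by
  obtain ⟨C, hCT, hC, hρC⟩ := hT.exists_isClosed_sdiff_lt hρT (ENNReal.half_pos hε).ne'
  obtain ⟨V, hTV, hV, -, hρV⟩ := hT.exists_isOpen_sdiff_lt hρT (ENNReal.half_pos hε).ne'
  obtain ⟨g, hgV, hgC, hg01⟩ := exists_continuous_zero_one_of_isClosed hV.isClosed_compl hC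
    (disjoint_compl_left.mono_right (hCT.trans hTV))
  refine ⟨g, hg01, V \ C, hV.measurableSet.diff hC.measurableSet, ?_, fun x hx => ?_⟩
  · calc ρ (V \ C) = ρ (V \ T ∪ T \ C) := by rw [sdiff_union_sdiff_cancel hTV hCT]
      _ ≤ ρ (V \ T) + ρ (T \ C) := measure_union_le _ _
      _ < ε / 2 + ε / 2 := ENNReal.add_lt_add hρV hρC
      _ = ε := ENNReal.add_halves ε
  · by_cases hxC : x ∈ C
    · simp [hgC hxC, hCT hxC]
    · have hxV : x ∉ V := fun h => hx ⟨h, hxC⟩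
      simp [hgV hxV, indicator_of_notMem (fun h => hxV (hTV h))]

lemma exists_continuous_abs_setIntegral_prod_lt {X Y : Type*} [PseudoMetricSpace X]
    [MeasurableSpace X] [BorelSpace X] [PseudoMetricSpace Y] [MeasurableSpace Y] [BorelSpace Y]
    {μ : Measure X} {ν : Measure Y} {F : X × Y → ℝ} (hF : Integrable F (μ.prod ν))
    {T : Set X} {U : Set Y} (hT : MeasurableSet T) (hU : MeasurableSet U) {ε : ℝ} (hε : 0 < ε) :
    ∃ g : C(X, ℝ), ∃ h : C(Y, ℝ), (∀ x, g x ∈ Icc (0 : ℝ) 1) ∧ (∀ y, h y ∈ Icc (0 : ℝ) 1) ∧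
      |∫ p in T ×ˢ U, F p ∂(μ.prod ν)| < |∫ p, F p * g p.1 * h p.2 ∂(μ.prod ν)| + ε := by
  set ρ := (μ.prod ν).withDensity fun p => ‖F p‖ₑ
  have : IsFiniteMeasure ρ := isFiniteMeasure_withDensity hF.2.ne
  have hε' : ENNReal.ofReal ε / 2 ≠ 0 := (ENNReal.half_pos (ENNReal.ofReal_pos.2 hε).ne').ne'
  obtain ⟨g, hg01, S, hS, hρS, hgS⟩ :=
    hT.exists_continuous_eqOn_indicator (ρ := ρ.fst) (measure_ne_top _ _) hε'
  obtain ⟨h, hh01, S', hS', hρS', hhS'⟩ :=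
    hU.exists_continuous_eqOn_indicator (ρ := ρ.snd) (measure_ne_top _ _) hε'
  have hmass : ρ (Prod.fst ⁻¹' S ∪ Prod.snd ⁻¹' S') < ENNReal.ofReal ε :=
    calc ρ (Prod.fst ⁻¹' S ∪ Prod.snd ⁻¹' S') ≤ ρ.fst S + ρ.snd S' := by
          rw [Measure.fst_apply hS, Measure.snd_apply hS']; exact measure_union_le _ _
      _ < ENNReal.ofReal ε / 2 + ENNReal.ofReal ε / 2 := ENNReal.add_lt_add hρS hρS'
      _ = ENNReal.ofReal ε := ENNReal.add_halves _
  have hT01 := indicator_one_mem_Icc T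
  have hU01 := indicator_one_mem_Icc U
  have hclose := (enorm_integral_sub_le_withDensity
    (hF.mul_fst_mul_snd_of_mem_Icc (measurable_one.indicator hT) hT01
      (measurable_one.indicator hU) hU01)
    (hF.mul_fst_mul_snd_of_mem_Icc g.continuous.measurable hg01 h.continuous.measurable hh01)
    (fun p => abs_mul_mul_sub_mul_mul_le _ (hT01 _) (hg01 _) (hU01 _) (hh01 _))
    ((measurable_fst hS).union (measurable_snd hS')) fun p hp => by
      simp only [mem_compl_iff, mem_union, mem_preimage, not_or] at hp
      rw [hgS hp.1, hhS' hp.2]).trans_lt hmass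
  rw [Real.enorm_eq_ofReal_abs, ENNReal.ofReal_lt_ofReal_iff hε] at hclose
  refine ⟨g, h, hg01, hh01, ?_⟩
  rw [setIntegral_prod_eq_integral_mul_indicator hT hU]
  exact sub_lt_iff_lt_add'.1 ((abs_sub_abs_le_abs_sub _ _).trans_lt hclose)

theorem cutNorm_eq_sup_continuous_general {K : Type*} [MetricSpace K]
    [MeasurableSpace K] [BorelSpace K]
    (μ : Measure K) [IsFiniteMeasure μ]
    (F : K × K → ℝ) (hF : Integrable F (μ.prod μ)) :
    cutNorm μ F =
      ⨆ gh : {gh : C(K, ℝ) × C(K, ℝ) //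
          (∀ x, gh.1 x ∈ Set.Icc (0:ℝ) 1) ∧ (∀ x, gh.2 x ∈ Set.Icc (0:ℝ) 1)},
        |∫ p, F p * gh.1.1 p.1 * gh.1.2 p.2 ∂(μ.prod μ)| := by
  have hbdd : ∀ s, |∫ p in s, F p ∂(μ.prod μ)| ≤ ∫ p, |F p| ∂(μ.prod μ) := fun _ =>
    abs_integral_le_integral_abs.trans
      (setIntegral_le_integral hF.abs (Eventually.of_forall fun _ => abs_nonneg _))
  refine Real.iSup_eq_iSup_of_forall_exists (fun _ => abs_nonneg _) (fun _ => abs_nonneg _)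
    ⟨_, forall_mem_range.2 fun _ => hbdd _⟩ ?_ ?_
  · rintro ⟨⟨g, h⟩, hg, hh⟩
    obtain ⟨T, U, hT, hU, hle⟩ := exists_measurableSet_abs_integral_mul_fst_mul_snd_le hF
      g.continuous.measurable hg h.continuous.measurable hh
    exact ⟨⟨(T, U), hT, hU⟩, hle⟩
  · rintro ⟨⟨T, U⟩, hT, hU⟩ ε hε
    obtain ⟨g, h, hg, hh, hlt⟩ := exists_continuous_abs_setIntegral_prod_lt hF hT hU hε
    exact ⟨⟨(g, h), hg, hh⟩, hlt⟩

theorem cutNorm_eq_sup_continuous {K : Type*} [MetricSpace K] [CompactSpace K]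
    [MeasurableSpace K] [BorelSpace K]
    (μ : Measure K) [IsFiniteMeasure μ]
    (F : K × K → ℝ) (hF : Integrable F (μ.prod μ)) :
    cutNorm μ F =
      ⨆ gh : {gh : C(K, ℝ) × C(K, ℝ) //
          (∀ x, gh.1 x ∈ Set.Icc (0:ℝ) 1) ∧ (∀ x, gh.2 x ∈ Set.Icc (0:ℝ) 1)},
        |∫ p, F p * gh.1.1 p.1 * gh.1.2 p.2 ∂(μ.prod μ)| :=
  cutNorm_eq_sup_continuous_general μ F hF
end

section
/- Let (S, μ) be a σ-finite measure space and let (Wₙ) be a sequence of non-negative symmetric integrable functions on S × S that satisfies sup_n ∫_{|Wₙ|>B} |Wₙ| dμ² → 0 as B → ∞ and is Cauchy for the cut norm. Then there exists a symmetric, non-negative, integrable function V on S × S with ‖Wₙ − V‖_□ → 0. -/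
/-!
The measures `ρₙ = Wₙ · μ²` have bounded total mass, so along an ultrafilter finer than `atTop`
the values `ρₙ(A)` converge to some `ℓ(A)`. Uniform integrability controls `ρₙ` on sets of finite
measure, and the cut-norm Cauchy property on the rectangles `Sⱼᶜ × S` and `S × Sⱼᶜ` (for a
σ-finite exhaustion `Sⱼ`) keeps mass from escaping to infinity; together they make the `ρₙ`
uniformly continuous at `∅`, so `ℓ` is a finite, swap-invariant measure `ν ≪ μ²`. Its symmetrised
Radon–Nikodym density `V` has `∫_{T×U} V = lim ∫_{T×U} Wₙ`, and since these integrals are Cauchy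
uniformly in `T, U`, the convergence is uniform, i.e. `‖Wₙ - V‖_□ → 0`.
-/

open MeasureTheory Filter Topology

open Set
open scoped ENNReal

lemma Set.antitone_iUnion_add {α : Type*} {f : ℕ → Set α} : Antitone fun k => ⋃ i, f (i + k) :=
  antitone_nat_of_succ_le fun k =>
    iUnion_subset fun i => subset_iUnion_of_subset (i + 1) (by rw [add_right_comm, add_assoc])

lemma Set.iInter_iUnion_add_eq_empty {α : Type*} {f : ℕ → Set α}
    (hf : Pairwise (Function.onFun Disjoint f)) :
    ⋂ k, ⋃ i, f (i + k) = ∅ := by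
  refine eq_empty_of_forall_notMem fun x hx => ?_
  obtain ⟨i, hi⟩ := mem_iUnion.1 (mem_iInter.1 hx 0)
  obtain ⟨j, hj⟩ := mem_iUnion.1 (mem_iInter.1 hx (i + 1))
  exact disjoint_left.1 (hf (show i + 0 ≠ j + (i + 1) by omega)) hi hj

section MeasureSequence

variable {α ι : Type*} [MeasurableSpace α]

def UniformlyContinuousAtEmpty (ρ : ι → Measure α) (l : Filter ι) : Prop :=
  ∀ R : ℕ → Set α, (∀ k, MeasurableSet (R k)) → Antitone R → ⋂ k, R k = ∅ →
    ∀ ⦃ε : ℝ⦄, 0 < ε → ∃ k, ∀ᶠ i in l, ρ i (R k) ≤ ENNReal.ofReal ε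

def UniformlyAbsolutelyContinuous (ρ : ι → Measure α) (M : Measure α) : Prop :=
  ∀ ⦃ε : ℝ⦄, 0 < ε → ∃ δ > 0, ∀ i A, MeasurableSet A → M A ≤ ENNReal.ofReal δ →
    ρ i A ≤ ENNReal.ofReal ε

variable {ρ : ι → Measure α} {l : Filter ι}

theorem UniformlyAbsolutelyContinuous.uniformlyContinuousAtEmpty {M : Measure α}
    (hac : UniformlyAbsolutelyContinuous ρ M)
    (htight : ∀ ⦃ε : ℝ⦄, 0 < ε →
      ∃ G, MeasurableSet G ∧ M G ≠ ∞ ∧ ∀ᶠ i in l, ρ i Gᶜ ≤ ENNReal.ofReal ε) :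
    UniformlyContinuousAtEmpty ρ l := by
  intro R hRm hR hR0 ε hε
  obtain ⟨G, hG, hGfin, hGc⟩ := htight (half_pos hε)
  obtain ⟨δ, hδ, hδA⟩ := hac (half_pos hε)
  have hRG : Tendsto (fun k => M (R k ∩ G)) atTop (𝓝 0) := by
    have := tendsto_measure_iInter_atTop (μ := M)
      (fun k => ((hRm k).inter hG).nullMeasurableSet)
      (fun a b h => inter_subset_inter_left _ (hR h))
      ⟨0, ne_top_of_le_ne_top hGfin (measure_mono inter_subset_right)⟩
    rwa [← iInter_inter, hR0, empty_inter, measure_empty] at this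
  obtain ⟨k, hk⟩ := ((tendsto_order.1 hRG).2 _ (ENNReal.ofReal_pos.2 hδ)).exists
  refine ⟨k, hGc.mono fun i hi => ?_⟩
  calc ρ i (R k) = ρ i (R k ∩ G) + ρ i (R k \ G) := (measure_inter_add_sdiff _ hG).symm
    _ ≤ ENNReal.ofReal (ε / 2) + ENNReal.ofReal (ε / 2) :=
      add_le_add (hδA i _ ((hRm k).inter hG) hk.le)
        ((measure_mono (sdiff_subset_compl _ _)).trans hi)
    _ = ENNReal.ofReal ε := by
      rw [← ENNReal.ofReal_add (half_pos hε).le (half_pos hε).le, add_halves]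

/-- `ℝ≥0∞` is compact, so the limit along `φ` of `ρ i A` exists for every `A`; it is finitely
additive, and uniform continuity at `∅` makes it countably additive. -/
theorem UniformlyContinuousAtEmpty.exists_measure_tendsto (hρ : UniformlyContinuousAtEmpty ρ l)
    (φ : Ultrafilter ι) (hφ : ↑φ ≤ l) :
    ∃ ν : Measure α, ∀ A, MeasurableSet A → Tendsto (fun i => ρ i A) φ (𝓝 (ν A)) := by
  set ℓ : Set α → ℝ≥0∞ := fun A => (φ.map fun i => ρ i A).lim
  have hℓ (A : Set α) : Tendsto (fun i => ρ i A) φ (𝓝 (ℓ A)) := (φ.map _).le_nhds_lim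
  have hmono : Monotone ℓ := fun A B hAB =>
    le_of_tendsto_of_tendsto' (hℓ A) (hℓ B) fun i => measure_mono hAB
  have hunion {A B : Set α} (hB : MeasurableSet B) (hAB : Disjoint A B) :
      ℓ (A ∪ B) = ℓ A + ℓ B :=
    tendsto_nhds_unique (hℓ _) (by simpa only [measure_union hAB hB] using (hℓ A).add (hℓ B))
  have hempty : ℓ ∅ = 0 := tendsto_nhds_unique (hℓ ∅) (by simp)
  refine ⟨Measure.ofMeasurable (fun A _ => ℓ A) hempty fun f hf hdisj => ?_,
    fun A hA => by simpa only [Measure.ofMeasurable_apply A hA] using hℓ A⟩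
  set R : ℕ → Set α := fun k => ⋃ i, f (i + k)
  have hR (k : ℕ) : MeasurableSet (R k) := .iUnion fun i => hf _
  have htail : Tendsto (fun k => ℓ (R k)) atTop (𝓝 0) := by
    refine ENNReal.tendsto_atTop_zero.2 fun ε hε => ?_
    obtain ⟨r, -, hr0, hrε⟩ := ENNReal.lt_iff_exists_real_btwn.1 hε
    obtain ⟨k, hk⟩ := hρ R hR antitone_iUnion_add (iInter_iUnion_add_eq_empty hdisj)
      (ENNReal.ofReal_pos.1 hr0)
    exact ⟨k, fun k' hk' => (hmono (antitone_iUnion_add hk')).trans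
      ((le_of_tendsto (hℓ _) (hk.filter_mono hφ)).trans hrε.le)⟩
  have hsplit (k : ℕ) : ℓ (⋃ i, f i) = ∑ i ∈ Finset.range k, ℓ (f i) + ℓ (R k) := by
    induction k with
    | zero => simp [R]
    | succ k ih =>
      have hRk : R k = f k ∪ R (k + 1) := by
        simp only [R, ← union_iUnion_nat_succ fun i => f (i + k), zero_add,
          add_right_comm _ 1 k, ← add_assoc]
      have hdisj_k : Disjoint (f k) (R (k + 1)) :=
        disjoint_iUnion_right.2 fun i => hdisj (by omega)
      rw [ih, hRk, hunion (hR _) hdisj_k, Finset.sum_range_succ, add_assoc]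
  have hsum := (ENNReal.tendsto_nat_tsum fun i => ℓ (f i)).add htail
  rw [add_zero] at hsum
  exact tendsto_nhds_unique (tendsto_const_nhds.congr hsplit) hsum

variable {ν : Measure α} [l.NeBot]

lemma absolutelyContinuous_of_tendsto {M : Measure α} (hρM : ∀ i, ρ i ≪ M)
    (hν : ∀ A, MeasurableSet A → Tendsto (fun i => ρ i A) l (𝓝 (ν A))) : ν ≪ M :=
  .mk fun A hA hMA => tendsto_nhds_unique (hν A hA) (by simp [hρM _ hMA])

lemma map_eq_self_of_tendsto {e : α → α} (he : Measurable e) (hρe : ∀ i, (ρ i).map e = ρ i)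
    (hν : ∀ A, MeasurableSet A → Tendsto (fun i => ρ i A) l (𝓝 (ν A))) : ν.map e = ν := by
  ext A hA
  have h := hν _ (he hA)
  simp_rw [← Measure.map_apply he hA, hρe] at h
  exact tendsto_nhds_unique h (hν A hA)

end MeasureSequence

lemma tendsto_measure_compl_spanningSets {α : Type*} [MeasurableSpace α] (μ ν : Measure α)
    [SigmaFinite μ] [IsFiniteMeasure ν] :
    Tendsto (fun j => ν (spanningSets μ j)ᶜ) atTop (𝓝 0) := by
  have := tendsto_measure_iInter_atTop (μ := ν)
    (fun j => (measurableSet_spanningSets μ j).compl.nullMeasurableSet)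
    (fun _ _ h => compl_subset_compl.2 (monotone_spanningSets μ h)) ⟨0, measure_ne_top _ _⟩
  rwa [← compl_iUnion, iUnion_spanningSets, compl_univ, measure_empty] at this

theorem exists_prod_spanningSets_eventually_compl_le {S : Type*} [MeasurableSpace S]
    (μ : Measure S) [SigmaFinite μ] {ρ : ℕ → Measure (S × S)} [∀ n, IsFiniteMeasure (ρ n)]
    (hrect : ∀ ⦃ε : ℝ⦄, 0 < ε → ∃ N, ∀ n ≥ N, ∀ T U, MeasurableSet T → MeasurableSet U →
      ρ n (T ×ˢ U) ≤ ρ N (T ×ˢ U) + ENNReal.ofReal ε) ⦃ε : ℝ⦄ (hε : 0 < ε) :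
    ∃ G, MeasurableSet G ∧ μ.prod μ G ≠ ∞ ∧ ∀ᶠ n in atTop, ρ n Gᶜ ≤ ENNReal.ofReal ε := by
  have hε' : 0 < ε / 4 := by positivity
  obtain ⟨N, hN⟩ := hrect hε'
  have hfst := (tendsto_order.1 (tendsto_measure_compl_spanningSets μ ((ρ N).map Prod.fst))).2
    _ (ENNReal.ofReal_pos.2 hε')
  have hsnd := (tendsto_order.1 (tendsto_measure_compl_spanningSets μ ((ρ N).map Prod.snd))).2
    _ (ENNReal.ofReal_pos.2 hε')
  obtain ⟨j, hj₁, hj₂⟩ := (hfst.and hsnd).exists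
  set s := spanningSets μ j
  have hs : MeasurableSet s := measurableSet_spanningSets μ j
  rw [Measure.map_apply measurable_fst hs.compl, ← prod_univ] at hj₁
  rw [Measure.map_apply measurable_snd hs.compl, ← univ_prod] at hj₂
  refine ⟨s ×ˢ s, hs.prod hs, ?_, eventually_atTop.2 ⟨N, fun n hn => ?_⟩⟩
  · rw [Measure.prod_prod]
    exact ENNReal.mul_ne_top (measure_spanningSets_lt_top μ j).ne
      (measure_spanningSets_lt_top μ j).ne
  calc ρ n (s ×ˢ s)ᶜ ≤ ρ n (sᶜ ×ˢ univ) + ρ n (univ ×ˢ sᶜ) := by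
        rw [compl_prod_eq_union]; exact measure_union_le _ _
    _ ≤ (ρ N (sᶜ ×ˢ univ) + ENNReal.ofReal (ε / 4))
          + (ρ N (univ ×ˢ sᶜ) + ENNReal.ofReal (ε / 4)) :=
        add_le_add (hN n hn _ _ hs.compl .univ) (hN n hn _ _ .univ hs.compl)
    _ ≤ (ENNReal.ofReal (ε / 4) + ENNReal.ofReal (ε / 4))
          + (ENNReal.ofReal (ε / 4) + ENNReal.ofReal (ε / 4)) := by gcongr
    _ = ENNReal.ofReal (ε / 4 + ε / 4 + (ε / 4 + ε / 4)) := by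
        rw [ENNReal.ofReal_add (by positivity) (by positivity),
          ENNReal.ofReal_add hε'.le hε'.le]
    _ = ENNReal.ofReal ε := by ring_nf

section Density

variable {α : Type*} [MeasurableSpace α]

lemma setIntegral_eq_toReal_withDensity_enorm {M : Measure α} {f : α → ℝ} (hf0 : ∀ x, 0 ≤ f x)
    (hf : AEStronglyMeasurable f M) {A : Set α} (hA : MeasurableSet A) :
    ∫ x in A, f x ∂M = (M.withDensity (fun x => ‖f x‖ₑ) A).toReal := by
  rw [withDensity_apply _ hA, ← integral_norm_eq_lintegral_enorm hf.restrict]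
  simp_rw [Real.norm_of_nonneg (hf0 _)]

lemma isFiniteMeasure_withDensity_enorm {M : Measure α} {f : α → ℝ} (hf : Integrable f M) :
    IsFiniteMeasure (M.withDensity fun x => ‖f x‖ₑ) :=
  isFiniteMeasure_withDensity hf.2.ne

lemma unifIntegrable_of_setIntegral_abs_lt {ι : Type*} {M : Measure α} {f : ι → α → ℝ}
    (hf : ∀ i, Integrable (f i) M)
    (htail : ∀ ε > (0 : ℝ), ∃ B : ℝ, ∀ i, ∫ x in {x | B < |f i x|}, |f i x| ∂M < ε) :
    UnifIntegrable f 1 M := by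
  refine unifIntegrable_of le_rfl ENNReal.one_ne_top (fun i => (hf i).aestronglyMeasurable)
    fun ε hε => ?_
  obtain ⟨B, hB⟩ := htail ε hε
  refine ⟨B.toNNReal + 1, fun i => ?_⟩
  have hsub : {x | (B.toNNReal + 1 : NNReal) ≤ ‖f i x‖₊} ⊆ {x | B < |f i x|} := fun x hx =>
    calc B ≤ B.toNNReal := Real.le_coe_toNNReal B
      _ < B.toNNReal + 1 := lt_add_one _
      _ ≤ |f i x| := by simpa [← NNReal.coe_le_coe] using hx
  calc eLpNorm ({x | (B.toNNReal + 1 : NNReal) ≤ ‖f i x‖₊}.indicator (f i)) 1 M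
      ≤ ∫⁻ x, {x | B < |f i x|}.indicator (fun x => ‖f i x‖ₑ) x ∂M := by
        rw [eLpNorm_one_eq_lintegral_enorm]
        refine lintegral_mono fun x => ?_
        rw [enorm_indicator_eq_indicator_enorm]
        exact indicator_le_indicator_of_subset hsub (fun _ => bot_le) x
    _ ≤ ∫⁻ x in {x | B < |f i x|}, ‖f i x‖ₑ ∂M := lintegral_indicator_le _ _
    _ = ENNReal.ofReal (∫ x in {x | B < |f i x|}, |f i x| ∂M) := by
        rw [← ofReal_integral_norm_eq_lintegral_enorm (hf i).integrableOn]
        simp_rw [Real.norm_eq_abs]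
    _ ≤ ENNReal.ofReal ε := ENNReal.ofReal_le_ofReal (hB i).le

lemma UnifIntegrable.uniformlyAbsolutelyContinuous_withDensity {ι : Type*} {M : Measure α}
    {f : ι → α → ℝ} (hf : UnifIntegrable f 1 M) :
    UniformlyAbsolutelyContinuous (fun i => M.withDensity fun x => ‖f i x‖ₑ) M := by
  intro ε hε
  obtain ⟨δ, hδ, h⟩ := hf hε
  refine ⟨δ, hδ, fun i A hA hMA => ?_⟩
  simpa only [withDensity_apply _ hA, eLpNorm_one_eq_lintegral_enorm,
    enorm_indicator_eq_indicator_enorm, lintegral_indicator hA] using h i A hA hMA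

lemma map_swap_withDensity {M : Measure (α × α)} (hM : MeasurePreserving Prod.swap M M)
    {g : α × α → ℝ≥0∞} (hg : ∀ p, g p.swap = g p) :
    (M.withDensity g).map Prod.swap = M.withDensity g := by
  ext A hA
  rw [Measure.map_apply measurable_swap hA, withDensity_apply _ (measurable_swap hA),
    withDensity_apply _ hA,
    ← hM.setLIntegral_comp_preimage_emb MeasurableEquiv.prodComm.measurableEmbedding]
  simp_rw [hg, preimage_preimage, Prod.swap_swap, preimage_id']

theorem exists_symm_density {M : Measure (α × α)} [SigmaFinite M]
    (hM : MeasurePreserving Prod.swap M M) {ν : Measure (α × α)} [IsFiniteMeasure ν]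
    (hνM : ν ≪ M) (hν : ν.map Prod.swap = ν) :
    ∃ V : α × α → ℝ, (∀ x y, V (x, y) = V (y, x)) ∧ (∀ p, 0 ≤ V p) ∧ Integrable V M ∧
      ∀ A, MeasurableSet A → ∫ p in A, V p ∂M = (ν A).toReal := by
  set D : α × α → ℝ := fun p => (ν.rnDeriv M p).toReal
  have hswap : MeasurableEmbedding (Prod.swap : α × α → α × α) :=
    MeasurableEquiv.prodComm.measurableEmbedding
  have hD : Integrable D M := Measure.integrable_toReal_rnDeriv
  have hDswap : Integrable (fun p => D p.swap) M := (hM.integrable_comp_emb hswap).2 hD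
  have hDset (A : Set (α × α)) : ∫ p in A, D p ∂M = (ν A).toReal :=
    Measure.setIntegral_toReal_rnDeriv hνM A
  refine ⟨fun p => (D p + D p.swap) / 2, fun x y => by simp only [Prod.swap_prod_mk, add_comm],
    fun p => by positivity, (hD.add hDswap).div_const 2, fun A hA => ?_⟩
  have hDswap_set : ∫ p in A, D p.swap ∂M = (ν A).toReal := by
    rw [← hM.setIntegral_image_emb hswap, image_swap_eq_preimage_swap, hDset,
      ← Measure.map_apply measurable_swap hA, hν]
  rw [integral_div, integral_add hD.integrableOn hDswap.integrableOn, hDset, hDswap_set,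
    add_self_div_two]

end Density

section CutNorm

variable {S : Type*} [MeasurableSpace S] {μ : Measure S}

def CutNormCauchySeq (μ : Measure S) (F : ℕ → S × S → ℝ) : Prop :=
  ∀ ε > (0 : ℝ), ∃ N, ∀ m ≥ N, ∀ n ≥ N, cutNorm μ (fun p => F m p - F n p) < ε

lemma cutNorm_nonneg (F : S × S → ℝ) : 0 ≤ cutNorm μ F :=
  Real.iSup_nonneg fun _ => abs_nonneg _

lemma abs_setIntegral_le_cutNorm {F : S × S → ℝ} (hF : Integrable F (μ.prod μ)) {T U : Set S}
    (hT : MeasurableSet T) (hU : MeasurableSet U) :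
    |∫ p in T ×ˢ U, F p ∂(μ.prod μ)| ≤ cutNorm μ F := by
  have hbdd : BddAbove (range fun TU :
      {TU : Set S × Set S // MeasurableSet TU.1 ∧ MeasurableSet TU.2} =>
        |∫ p in TU.1.1 ×ˢ TU.1.2, F p ∂(μ.prod μ)|) :=
    ⟨∫ p, |F p| ∂(μ.prod μ), forall_mem_range.2 fun _ => abs_integral_le_integral_abs.trans
      (setIntegral_le_integral hF.abs (ae_of_all _ fun _ => abs_nonneg _))⟩
  exact le_ciSup hbdd ⟨(T, U), hT, hU⟩

lemma cutNorm_le {F : S × S → ℝ} {c : ℝ}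
    (h : ∀ T U, MeasurableSet T → MeasurableSet U → |∫ p in T ×ˢ U, F p ∂(μ.prod μ)| ≤ c) :
    cutNorm μ F ≤ c :=
  Real.iSup_le (fun TU => h _ _ TU.2.1 TU.2.2) ((abs_nonneg _).trans (h ∅ ∅ .empty .empty))

lemma abs_setIntegral_sub_le_cutNorm {F G : S × S → ℝ} (hF : Integrable F (μ.prod μ))
    (hG : Integrable G (μ.prod μ)) {T U : Set S} (hT : MeasurableSet T) (hU : MeasurableSet U) :
    |∫ p in T ×ˢ U, F p ∂(μ.prod μ) - ∫ p in T ×ˢ U, G p ∂(μ.prod μ)|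
      ≤ cutNorm μ (fun p => F p - G p) := by
  rw [← integral_sub hF.integrableOn hG.integrableOn]
  exact abs_setIntegral_le_cutNorm (hF.sub hG) hT hU

variable {F : ℕ → S × S → ℝ}

lemma CutNormCauchySeq.cauchySeq_integral (hcauchy : CutNormCauchySeq μ F)
    (hF : ∀ n, Integrable (F n) (μ.prod μ)) : CauchySeq fun n => ∫ p, F n p ∂(μ.prod μ) := by
  refine Metric.cauchySeq_iff.2 fun ε hε => ?_
  obtain ⟨N, hN⟩ := hcauchy ε hε
  refine ⟨N, fun m hm n hn => lt_of_le_of_lt ?_ (hN m hm n hn)⟩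
  simpa [Real.dist_eq] using abs_setIntegral_sub_le_cutNorm (hF m) (hF n) .univ .univ

lemma CutNormCauchySeq.withDensity_prod_le_add (hcauchy : CutNormCauchySeq μ F)
    (hF0 : ∀ n p, 0 ≤ F n p) (hF : ∀ n, Integrable (F n) (μ.prod μ)) ⦃ε : ℝ⦄ (hε : 0 < ε) :
    ∃ N, ∀ n ≥ N, ∀ T U, MeasurableSet T → MeasurableSet U →
      (μ.prod μ).withDensity (fun p => ‖F n p‖ₑ) (T ×ˢ U)
        ≤ (μ.prod μ).withDensity (fun p => ‖F N p‖ₑ) (T ×ˢ U) + ENNReal.ofReal ε := by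
  obtain ⟨N, hN⟩ := hcauchy ε hε
  refine ⟨N, fun n hn T U hT hU => ?_⟩
  have h := (abs_le.1 ((abs_setIntegral_sub_le_cutNorm (hF n) (hF N) hT hU).trans
    (hN n hn N le_rfl).le)).2
  have hfin (k : ℕ) : (μ.prod μ).withDensity (fun p => ‖F k p‖ₑ) (T ×ˢ U) ≠ ∞ :=
    have := isFiniteMeasure_withDensity_enorm (hF k)
    measure_ne_top _ _
  rw [setIntegral_eq_toReal_withDensity_enorm (hF0 n) (hF n).1 (hT.prod hU),
    setIntegral_eq_toReal_withDensity_enorm (hF0 N) (hF N).1 (hT.prod hU)] at h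
  rw [← ENNReal.ofReal_toReal (hfin n), ← ENNReal.ofReal_toReal (hfin N),
    ← ENNReal.ofReal_add ENNReal.toReal_nonneg hε.le]
  exact ENNReal.ofReal_le_ofReal (by linarith)

theorem CutNormCauchySeq.tendsto_cutNorm_sub {G : S × S → ℝ} (hcauchy : CutNormCauchySeq μ F)
    (hF : ∀ n, Integrable (F n) (μ.prod μ)) (hG : Integrable G (μ.prod μ)) {l : Filter ℕ}
    [l.NeBot] (hl : l ≤ atTop)
    (hlim : ∀ T U, MeasurableSet T → MeasurableSet U →
      Tendsto (fun n => ∫ p in T ×ˢ U, F n p ∂(μ.prod μ)) l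
        (𝓝 (∫ p in T ×ˢ U, G p ∂(μ.prod μ)))) :
    Tendsto (fun n => cutNorm μ (fun p => F n p - G p)) atTop (𝓝 0) := by
  refine Metric.tendsto_atTop.2 fun ε hε => ?_
  obtain ⟨N, hN⟩ := hcauchy (ε / 2) (half_pos hε)
  refine ⟨N, fun n hn => ?_⟩
  rw [Real.dist_eq, sub_zero, abs_of_nonneg (cutNorm_nonneg _)]
  refine (cutNorm_le fun T U hT hU => ?_).trans_lt (half_lt_self hε)
  rw [integral_sub (hF n).integrableOn hG.integrableOn]
  refine le_of_tendsto ((hlim T U hT hU).const_sub _).abs ?_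
  filter_upwards [hl (eventually_ge_atTop N)] with m hm
  exact (abs_setIntegral_sub_le_cutNorm (hF n) (hF m) hT hU).trans (hN n hn m hm).le

end CutNorm

theorem cutNorm_complete_of_nonneg_semiUI {S : Type*} [MeasurableSpace S]
    (μ : Measure S) [SigmaFinite μ]
    (W : ℕ → S × S → ℝ)
    (hpos : ∀ n p, 0 ≤ W n p)
    (hsymm : ∀ n x y, W n (x, y) = W n (y, x))
    (hint : ∀ n, Integrable (W n) (μ.prod μ))
    (htail : ∀ ε > (0:ℝ), ∃ B : ℝ, ∀ n,
      ∫ p in {p | B < |W n p|}, |W n p| ∂(μ.prod μ) < ε)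
    (hcauchy : ∀ ε > (0:ℝ), ∃ N, ∀ m ≥ N, ∀ n ≥ N,
      cutNorm μ (fun p => W m p - W n p) < ε) :
    ∃ V : S × S → ℝ, (∀ x y, V (x, y) = V (y, x)) ∧
      (∀ᵐ p ∂(μ.prod μ), 0 ≤ V p) ∧ Integrable V (μ.prod μ) ∧
      Tendsto (fun n => cutNorm μ (fun p => W n p - V p)) atTop (𝓝 0) := by
  set ρ : ℕ → Measure (S × S) := fun n => (μ.prod μ).withDensity fun p => ‖W n p‖ₑ
  have hρW (n : ℕ) {A : Set (S × S)} (hA : MeasurableSet A) :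
      ∫ p in A, W n p ∂(μ.prod μ) = (ρ n A).toReal :=
    setIntegral_eq_toReal_withDensity_enorm (hpos n) (hint n).1 hA
  have (n : ℕ) : IsFiniteMeasure (ρ n) := isFiniteMeasure_withDensity_enorm (hint n)
  have hρ : UniformlyContinuousAtEmpty ρ atTop :=
    (UnifIntegrable.uniformlyAbsolutelyContinuous_withDensity
      (unifIntegrable_of_setIntegral_abs_lt hint htail)).uniformlyContinuousAtEmpty
      (exists_prod_spanningSets_eventually_compl_le μ
        (CutNormCauchySeq.withDensity_prod_le_add hcauchy hpos hint))
  obtain ⟨ν, hν⟩ := hρ.exists_measure_tendsto (Ultrafilter.of atTop) (Ultrafilter.of_le _)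
  obtain ⟨C, hC⟩ := (CutNormCauchySeq.cauchySeq_integral hcauchy hint).isBounded_range.bddAbove
  have hmass (n : ℕ) : ρ n univ ≤ ENNReal.ofReal C := by
    rw [← ENNReal.ofReal_toReal (measure_ne_top _ _), ← hρW n .univ, Measure.restrict_univ]
    exact ENNReal.ofReal_le_ofReal (hC (mem_range_self n))
  have : IsFiniteMeasure ν := ⟨(le_of_tendsto' (hν _ .univ) hmass).trans_lt ENNReal.ofReal_lt_top⟩
  have hswap : MeasurePreserving Prod.swap (μ.prod μ) (μ.prod μ) := Measure.measurePreserving_swap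
  obtain ⟨V, hVsymm, hV0, hVint, hVset⟩ := exists_symm_density hswap
    (absolutelyContinuous_of_tendsto (fun n => withDensity_absolutelyContinuous _ _) hν)
    (map_eq_self_of_tendsto measurable_swap
      (fun n => map_swap_withDensity hswap fun ⟨x, y⟩ => by rw [Prod.swap_prod_mk, hsymm]) hν)
  refine ⟨V, hVsymm, ae_of_all _ hV0, hVint, CutNormCauchySeq.tendsto_cutNorm_sub hcauchy hint hVint
    (Ultrafilter.of_le atTop) fun T U hT hU => ?_⟩
  simp_rw [hVset _ (hT.prod hU), hρW _ (hT.prod hU)]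
  exact (ENNReal.tendsto_toReal (measure_ne_top ν _)).comp (hν _ (hT.prod hU))
end

section
/- Let W(x,y) := e^{−x−y} 1_{x ≥ 0} 1_{y ≥ 0} and consider W₁ = W on S₁ = [−a, ∞) and W₂ = W on S₂ = [0, ∞) (with Lebesgue measure, a > 0). Then there is no coupling (φ₁, φ₂) of S₁ and S₂ (measure-preserving maps φᵢ : S → Sᵢ from a common σ-finite measure space) such that W₁∘(φ₁×φ₁) = W₂∘(φ₂×φ₂) almost everywhere. -/
/-!
Almost every point of `S` is sent by `φ₂` into `[0, ∞)`, where `W` is positive, so the pull-back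
of `W` by `φ₂` is positive almost everywhere on `S × S`. The pull-back by `φ₁` vanishes on
`N × N` with `N = φ₁⁻¹' (-∞, 0)`, and `N` has the measure `a > 0` of `[-a, 0)`, so `N × N` has
measure `a² > 0`.
-/

open MeasureTheory Set

lemma ite_exp_ne_zero_iff (x y : ℝ) :
    (if 0 ≤ x ∧ 0 ≤ y then Real.exp (-x - y) else 0) ≠ 0 ↔ 0 ≤ x ∧ 0 ≤ y := by
  split_ifs with h <;> simp [h, Real.exp_ne_zero]

lemma volume_restrict_Ici_Iio (b c : ℝ) :
    volume.restrict (Ici b) (Iio c) = ENNReal.ofReal (c - b) := by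
  rw [Measure.restrict_apply measurableSet_Iio, Iio_inter_Ici, Real.volume_Ico]

lemma ae_prod_of_ae_of_ae {α β : Type*} [MeasurableSpace α] [MeasurableSpace β]
    {μ : Measure α} {ν : Measure β} {p : α → Prop} {q : β → Prop}
    (hp : ∀ᵐ x ∂μ, p x) (hq : ∀ᵐ y ∂ν, q y) : ∀ᵐ z ∂μ.prod ν, p z.1 ∧ q z.2 :=
  (Measure.quasiMeasurePreserving_fst.ae hp).and (Measure.quasiMeasurePreserving_snd.ae hq)

theorem no_exact_coupling (a : ℝ) (ha : 0 < a)
    (W : ℝ × ℝ → ℝ)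
    (hW : ∀ q, W q = if 0 ≤ q.1 ∧ 0 ≤ q.2 then Real.exp (-q.1 - q.2) else 0)
    (S : Type*) [MeasurableSpace S] (μ : Measure S) [SigmaFinite μ]
    (φ₁ φ₂ : S → ℝ)
    (hφ₁ : MeasurePreserving φ₁ μ (volume.restrict (Set.Ici (-a))))
    (hφ₂ : MeasurePreserving φ₂ μ (volume.restrict (Set.Ici (0:ℝ)))) :
    ¬ ((fun q : S × S => W (φ₁ q.1, φ₁ q.2)) =ᵐ[μ.prod μ]
        fun q : S × S => W (φ₂ q.1, φ₂ q.2)) := by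
  intro h
  have hφ₂_nonneg : ∀ᵐ x ∂μ, 0 ≤ φ₂ x :=
    hφ₂.quasiMeasurePreserving.ae (ae_restrict_mem measurableSet_Ici)
  have hφ₁_nonneg : ∀ᵐ q ∂μ.prod μ, 0 ≤ φ₁ q.1 ∧ 0 ≤ φ₁ q.2 := by
    filter_upwards [h, ae_prod_of_ae_of_ae hφ₂_nonneg hφ₂_nonneg] with q hq hq₂
    rw [← ite_exp_ne_zero_iff, ← hW (φ₁ q.1, φ₁ q.2), hq, hW, ite_exp_ne_zero_iff]
    exact hq₂
  set N := φ₁ ⁻¹' Iio 0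
  have hN : μ N = ENNReal.ofReal a := by
    rw [hφ₁.measure_preimage measurableSet_Iio.nullMeasurableSet, volume_restrict_Ici_Iio,
      zero_sub, neg_neg]
  have hNN : (μ.prod μ) (N ×ˢ N) = 0 :=
    measure_eq_zero_iff_ae_notMem.2 <| hφ₁_nonneg.mono fun q hq hqN => not_le.2 hqN.1 hq.1
  rw [Measure.prod_prod, hN, mul_self_eq_zero, ENNReal.ofReal_eq_zero] at hNN
  exact hNN.not_gt ha
end

section
/- Let W₁ = 1 and W₂ = −1 be graphons on the one-point measure space {1} with μ{1} = 1, and let W̃₁, W̃₂ be their trivial extensions to {1, 2} where both points have measure 1 (W̃ᵢ equals Wᵢ on {1}×{1} and 0 elsewhere). Then for any p > 1, the minimal L^p distance over the two couplings of {1,2} with itself (the identity and the transposition) satisfies min(‖W̃₁ − W̃₂‖_{L^p}, ‖W̃₁ − W̃₂∘(σ×σ)‖_{L^p}) = 2^{1/p} < 2 = ‖W₁ − W₂‖_{L^p}. Hence δ_p is not invariant under trivial extensions for signed graphons when p > 1. -/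
theorem delta_p_not_invariant_trivial_extension (p : ℝ) (hp : 1 < p)
    (W₁ W₂ : Fin 2 × Fin 2 → ℝ)
    (hW₁ : ∀ q, W₁ q = if q.1 = 0 ∧ q.2 = 0 then 1 else 0)
    (hW₂ : ∀ q, W₂ q = if q.1 = 0 ∧ q.2 = 0 then -1 else 0)
    (σ : Fin 2 → Fin 2) (hσ : σ 0 = 1 ∧ σ 1 = 0) :
    (|(1:ℝ) - (-1:ℝ)| ^ p) ^ (1/p) = 2 ∧
    min ((∑ q : Fin 2 × Fin 2, |W₁ q - W₂ q| ^ p) ^ (1/p))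
        ((∑ q : Fin 2 × Fin 2, |W₁ q - W₂ (σ q.1, σ q.2)| ^ p) ^ (1/p))
      = (2:ℝ) ^ (1/p) ∧ (2:ℝ) ^ (1/p) < 2 := by
  have hp0 : (0:ℝ) < p := lt_trans one_pos hp
  have hppos : p ≠ 0 := ne_of_gt hp0
  have h2p : ((2:ℝ) ^ p) ^ (1/p) = 2 := by
    rw [← Real.rpow_mul (by norm_num : (0:ℝ) ≤ 2), mul_one_div, div_self hppos,
      Real.rpow_one]
  have h0p : (0:ℝ) ^ p = 0 := Real.zero_rpow hppos
  have h1p : (1:ℝ) ^ p = 1 := Real.one_rpow p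
  have hfirst : (|(1:ℝ) - (-1:ℝ)| ^ p) ^ (1/p) = 2 := by
    rw [show |(1:ℝ) - (-1:ℝ)| = 2 by norm_num]; exact h2p
  have hsum1 : (∑ q : Fin 2 × Fin 2, |W₁ q - W₂ q| ^ p) = 2 ^ p := by
    rw [Fintype.sum_prod_type]
    simp [Fin.sum_univ_succ, hW₁, hW₂, h0p]
    norm_num
  have hsum2 : (∑ q : Fin 2 × Fin 2, |W₁ q - W₂ (σ q.1, σ q.2)| ^ p) = 2 := by
    rw [Fintype.sum_prod_type]
    simp [Fin.sum_univ_succ, hW₁, hW₂, hσ.1, hσ.2, h0p, h1p]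
    norm_num
  have hlt : (2:ℝ) ^ (1/p) < 2 := by
    nth_rewrite 2 [← Real.rpow_one 2]
    exact Real.rpow_lt_rpow_of_exponent_lt (by norm_num) (by
      rw [div_lt_one hp0]; linarith)
  refine ⟨hfirst, ?_, hlt⟩
  rw [hsum1, hsum2, h2p]
  exact min_eq_right (le_of_lt hlt)
end
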